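/- arXiv:2307.08768 — 8 statements merged into one kernel-verified Lean document; each statement's English description precedes it below -/
import Mathlib

section
/- For the two-outcome constant product cost function C(x;Π) = [−Π₁−Π₂+x₁+x₂ + √(((Π₁−x₁)−(Π₂−x₂))² + 4Π₁Π₂)]/2 with Π₁,Π₂ > 0, one has min(x₁,x₂) ≤ C(x;Π) ≤ max(x₁,x₂) for every x ∈ ℝ², with equality at either endpoint if and only if x₁ = x₂. -/
/-!
Write `s = Π₁ + Π₂`, `c = Π₁ - Π₂` and `d = x₁ - x₂`. Since `4 Π₁ Π₂ = s² - c²`, the radicand of `C`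
is `s² - 2 c d + d²`, the squared third side of a triangle with sides `s` and `|d|` enclosing an
angle of cosine `c / s`. As `|c| < s`, the triangle inequality puts its square root between
`s - |d|` and `s + |d|`, strictly unless `d = 0`. As `C = (x₁ + x₂ - s + √·) / 2` while
`min x, max x = (x₁ + x₂ ∓ |d|) / 2`, these are the claimed bounds and their equality cases.
-/

/-- Two-outcome constant product cost function. -/
noncomputable def cpCost (P1 P2 x1 x2 : ℝ) : ℝ :=
  (-P1 - P2 + x1 + x2 + Real.sqrt (((P1 - x1) - (P2 - x2))^2 + 4 * P1 * P2)) / 2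

section TriangleInequality

variable {c s d : ℝ}

lemma sq_sub_abs_le_of_abs_le (hc : |c| ≤ s) : (s - |d|) ^ 2 ≤ s ^ 2 - 2 * c * d + d ^ 2 := by
  have hcd : |c * d| ≤ s * |d| := by
    rw [abs_mul]; exact mul_le_mul_of_nonneg_right hc (abs_nonneg d)
  nlinarith [le_abs_self (c * d), sq_abs d]

lemma le_sq_add_abs_of_abs_le (hc : |c| ≤ s) : s ^ 2 - 2 * c * d + d ^ 2 ≤ (s + |d|) ^ 2 := by
  have hcd : |c * d| ≤ s * |d| := by
    rw [abs_mul]; exact mul_le_mul_of_nonneg_right hc (abs_nonneg d)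
  nlinarith [neg_abs_le (c * d), sq_abs d]

lemma sq_sub_abs_lt_of_abs_lt (hc : |c| < s) (hd : d ≠ 0) :
    (s - |d|) ^ 2 < s ^ 2 - 2 * c * d + d ^ 2 := by
  have hcd : |c * d| < s * |d| := by
    rw [abs_mul]; exact mul_lt_mul_of_pos_right hc (abs_pos.mpr hd)
  nlinarith [le_abs_self (c * d), sq_abs d]

lemma lt_sq_add_abs_of_abs_lt (hc : |c| < s) (hd : d ≠ 0) :
    s ^ 2 - 2 * c * d + d ^ 2 < (s + |d|) ^ 2 := by
  have hcd : |c * d| < s * |d| := by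
    rw [abs_mul]; exact mul_lt_mul_of_pos_right hc (abs_pos.mpr hd)
  nlinarith [neg_abs_le (c * d), sq_abs d]

lemma sub_abs_le_sqrt_of_abs_le (hc : |c| ≤ s) : s - |d| ≤ √(s ^ 2 - 2 * c * d + d ^ 2) :=
  (le_abs_self _).trans (Real.abs_le_sqrt (sq_sub_abs_le_of_abs_le hc))

lemma sqrt_le_add_abs_of_abs_le (hc : |c| ≤ s) : √(s ^ 2 - 2 * c * d + d ^ 2) ≤ s + |d| :=
  Real.sqrt_le_iff.mpr
    ⟨add_nonneg ((abs_nonneg c).trans hc) (abs_nonneg d), le_sq_add_abs_of_abs_le hc⟩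

lemma sub_abs_lt_sqrt_of_abs_lt (hc : |c| < s) (hd : d ≠ 0) :
    s - |d| < √(s ^ 2 - 2 * c * d + d ^ 2) :=
  calc s - |d| ≤ √((s - |d|) ^ 2) := (le_abs_self _).trans (Real.sqrt_sq_eq_abs _).ge
    _ < √(s ^ 2 - 2 * c * d + d ^ 2) :=
      Real.sqrt_lt_sqrt (sq_nonneg _) (sq_sub_abs_lt_of_abs_lt hc hd)

lemma sqrt_lt_add_abs_of_abs_lt (hc : |c| < s) (hd : d ≠ 0) :
    √(s ^ 2 - 2 * c * d + d ^ 2) < s + |d| :=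
  (Real.sqrt_lt' (add_pos_of_nonneg_of_pos ((abs_nonneg c).trans hc.le) (abs_pos.mpr hd))).mpr
    (lt_sq_add_abs_of_abs_lt hc hd)

end TriangleInequality

lemma cpCost_eq (P1 P2 x1 x2 : ℝ) :
    cpCost P1 P2 x1 x2 = (x1 + x2 - (P1 + P2) +
      √((P1 + P2) ^ 2 - 2 * (P1 - P2) * (x1 - x2) + (x1 - x2) ^ 2)) / 2 := by
  rw [cpCost]
  ring_nf

theorem stmt_1 (P1 P2 x1 x2 : ℝ) (hP1 : 0 < P1) (hP2 : 0 < P2) :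
    min x1 x2 ≤ cpCost P1 P2 x1 x2 ∧ cpCost P1 P2 x1 x2 ≤ max x1 x2 ∧
    ((cpCost P1 P2 x1 x2 = min x1 x2 ∨ cpCost P1 P2 x1 x2 = max x1 x2) ↔ x1 = x2) := by
  have hP : |P1 - P2| < P1 + P2 := abs_sub_lt_iff.mpr ⟨by linarith, by linarith⟩
  have hC := cpCost_eq P1 P2 x1 x2
  have hlo := sub_abs_le_sqrt_of_abs_le (d := x1 - x2) hP.le
  have hhi := sqrt_le_add_abs_of_abs_le (d := x1 - x2) hP.le
  have hsum := min_add_max x1 x2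
  have hdiff := max_sub_min_eq_abs x1 x2
  rw [abs_sub_comm] at hdiff
  refine ⟨by linarith, by linarith, fun hend => ?_, fun heq => ?_⟩
  · by_contra hne
    have hd : x1 - x2 ≠ 0 := sub_ne_zero.mpr hne
    have hlo' := sub_abs_lt_sqrt_of_abs_lt hP hd
    have hhi' := sqrt_lt_add_abs_of_abs_lt hP hd
    rcases hend with h | h <;> linarith
  · have hd : |x1 - x2| = 0 := by rw [heq, sub_self, abs_zero]
    left
    linarith
end

section
/- The two-outcome constant product cost function x ↦ C(x;Π) = [−Π₁−Π₂+x₁+x₂ + √(((Π₁−x₁)−(Π₂−x₂))² + 4Π₁Π₂)]/2 is convex on ℝ² and strictly increasing in each coordinate, for any fixed Π₁, Π₂ > 0. -/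
open Set

theorem convexOn_sqrt_sq_add {c : ℝ} (hc : 0 ≤ c) :
    ConvexOn ℝ univ (fun u : ℝ => √(u ^ 2 + c)) := by
  have h : (fun u : ℝ => √(u ^ 2 + c)) =
      (‖·‖) ∘ AffineMap.lineMap (!₂[0, √c] : EuclideanSpace ℝ (Fin 2)) !₂[1, √c] := by
    ext u
    simp [EuclideanSpace.norm_eq, AffineMap.lineMap_apply, hc]
  rw [h]
  exact (convexOn_norm convex_univ).comp_affineMap _

theorem abs_sqrt_sq_add_sub_lt {c u v : ℝ} (hc : 0 < c) (huv : u < v) :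
    |√(v ^ 2 + c) - √(u ^ 2 + c)| < v - u := by
  have hu := Real.sq_sqrt (by positivity : 0 ≤ u ^ 2 + c)
  have hv := Real.sq_sqrt (by positivity : 0 ≤ v ^ 2 + c)
  have key : u * v + c < √(u ^ 2 + c) * √(v ^ 2 + c) := by
    rw [← Real.sqrt_mul (by positivity)]
    exact Real.lt_sqrt_of_sq_lt (by nlinarith [mul_pos hc (pow_pos (sub_pos.2 huv) 2)])
  exact abs_lt_of_sq_lt_sq (by nlinarith) (by linarith)

theorem convexOn_cpCost {P1 P2 : ℝ} (hP : 0 ≤ P1 * P2) :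
    ConvexOn ℝ univ (fun x : ℝ × ℝ => cpCost P1 P2 x.1 x.2) := by
  let φ : ℝ × ℝ →ᵃ[ℝ] ℝ :=
    ⟨fun x => (P1 - x.1) - (P2 - x.2), LinearMap.snd ℝ ℝ ℝ - LinearMap.fst ℝ ℝ ℝ, fun x v => by
      simp only [vadd_eq_add, Prod.fst_add, Prod.snd_add, LinearMap.sub_apply, LinearMap.snd_apply,
        LinearMap.fst_apply]
      ring⟩
  let ψ : ℝ × ℝ →ᵃ[ℝ] ℝ :=
    ⟨fun x => -P1 - P2 + x.1 + x.2, LinearMap.fst ℝ ℝ ℝ + LinearMap.snd ℝ ℝ ℝ, fun x v => by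
      simp only [vadd_eq_add, Prod.fst_add, Prod.snd_add, LinearMap.add_apply, LinearMap.fst_apply,
        LinearMap.snd_apply]
      ring⟩
  have h := (((convexOn_id convex_univ).comp_affineMap ψ).add
    ((convexOn_sqrt_sq_add (c := 4 * P1 * P2) (by linarith)).comp_affineMap φ)).smul
    (by norm_num : (0 : ℝ) ≤ 1 / 2)
  refine h.congr fun x _ => ?_
  simp only [cpCost, φ, ψ, AffineMap.coe_mk, Pi.add_apply, Function.comp_apply, id, smul_eq_mul]
  ring

theorem cpCost_strictMono_left {P1 P2 : ℝ} (hP : 0 < P1 * P2) (x2 : ℝ) :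
    StrictMono fun x1 => cpCost P1 P2 x1 x2 := by
  intro s t hst
  have hsqrt := (abs_lt.1 (abs_sqrt_sq_add_sub_lt (by linarith : 0 < 4 * P1 * P2)
    (by linarith : (P1 - t) - (P2 - x2) < (P1 - s) - (P2 - x2)))).2
  simp only [cpCost]
  linarith

theorem cpCost_strictMono_right {P1 P2 : ℝ} (hP : 0 < P1 * P2) (x1 : ℝ) :
    StrictMono fun x2 => cpCost P1 P2 x1 x2 := by
  intro s t hst
  have hsqrt := (abs_lt.1 (abs_sqrt_sq_add_sub_lt (by linarith : 0 < 4 * P1 * P2)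
    (by linarith : (P1 - x1) - (P2 - s) < (P1 - x1) - (P2 - t)))).1
  simp only [cpCost]
  linarith

theorem stmt_2 (P1 P2 : ℝ) (hP1 : 0 < P1) (hP2 : 0 < P2) :
    ConvexOn ℝ Set.univ (fun x : ℝ × ℝ => cpCost P1 P2 x.1 x.2) ∧
    (∀ x2 : ℝ, StrictMono (fun x1 : ℝ => cpCost P1 P2 x1 x2)) ∧
    (∀ x1 : ℝ, StrictMono (fun x2 : ℝ => cpCost P1 P2 x1 x2)) := by
  have hP : 0 < P1 * P2 := mul_pos hP1 hP2
  exact ⟨convexOn_cpCost hP.le, cpCost_strictMono_left hP, cpCost_strictMono_right hP⟩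
end

section
/- The two-outcome constant product cost function is path independent: for all x, y ∈ ℝ², C(x+y;Π) = C(x;Π) + C(y;Π'), where Π' = (Π₁ − x₁ + C(x;Π), Π₂ − x₂ + C(x;Π)) is the post-trade liquidity after bet x. -/
theorem cpCost_add_const (P1 P2 x1 x2 t : ℝ) :
    cpCost P1 P2 (x1 + t) (x2 + t) = cpCost P1 P2 x1 x2 + t := by
  unfold cpCost
  ring_nf

theorem cpCost_eq_of_mul_eq {P1 P2 Q1 Q2 : ℝ} (h : Q1 * Q2 = P1 * P2) (y1 y2 : ℝ) :
    cpCost Q1 Q2 y1 y2 = cpCost P1 P2 (P1 - Q1 + y1) (P2 - Q2 + y2) := by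
  have hdisc : ((Q1 - y1) - (Q2 - y2)) ^ 2 + 4 * Q1 * Q2
      = ((P1 - (P1 - Q1 + y1)) - (P2 - (P2 - Q2 + y2))) ^ 2 + 4 * P1 * P2 := by
    rw [mul_assoc, h]; ring
  unfold cpCost
  rw [hdisc]
  ring

theorem cpCost_reserves_mul {P1 P2 : ℝ} (hP : 0 ≤ P1 * P2) (x1 x2 : ℝ) :
    (P1 - x1 + cpCost P1 P2 x1 x2) * (P2 - x2 + cpCost P1 P2 x1 x2) = P1 * P2 := by
  have hdisc : 0 ≤ ((P1 - x1) - (P2 - x2)) ^ 2 + 4 * P1 * P2 := by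
    rw [mul_assoc]; positivity
  unfold cpCost
  nlinarith [Real.sq_sqrt hdisc]

theorem stmt_4 (P1 P2 x1 x2 y1 y2 : ℝ) (hP1 : 0 < P1) (hP2 : 0 < P2) :
    cpCost P1 P2 (x1 + y1) (x2 + y2) =
      cpCost P1 P2 x1 x2 +
        cpCost (P1 - x1 + cpCost P1 P2 x1 x2) (P2 - x2 + cpCost P1 P2 x1 x2) y1 y2 := by
  set c := cpCost P1 P2 x1 x2
  have hcurve := cpCost_reserves_mul (mul_pos hP1 hP2).le x1 x2
  have hshift : cpCost P1 P2 (P1 - (P1 - x1 + c) + y1) (P2 - (P2 - x2 + c) + y2)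
      = cpCost P1 P2 (x1 + y1) (x2 + y2) - c := by
    rw [eq_sub_iff_add_eq, ← cpCost_add_const]
    ring_nf
  rw [cpCost_eq_of_mul_eq hcurve, hshift]
  ring
end

section
/- The two-outcome constant product cost function preserves the utility level: for every x ∈ ℝ², the post-trade reserves Πᵢ − xᵢ + C(x;Π) are strictly positive and their product equals Π₁Π₂; in particular, buying and immediately selling any bet yields no round-trip profit: C(x;Π) + C(−x;Π') = 0 where Π' is the post-trade liquidity. -/
section CpCost

variable (P1 P2 x1 x2 : ℝ)

lemma sub_add_cpCost_left :
    P1 - x1 + cpCost P1 P2 x1 x2 =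
      (√(((P1 - x1) - (P2 - x2))^2 + 4 * P1 * P2) + ((P1 - x1) - (P2 - x2))) / 2 := by
  unfold cpCost; ring

lemma sub_add_cpCost_right :
    P2 - x2 + cpCost P1 P2 x1 x2 =
      (√(((P1 - x1) - (P2 - x2))^2 + 4 * P1 * P2) - ((P1 - x1) - (P2 - x2))) / 2 := by
  unfold cpCost; ring

variable {P1 P2}

lemma sub_add_cpCost_pos (hP : 0 < P1 * P2) :
    0 < P1 - x1 + cpCost P1 P2 x1 x2 ∧ 0 < P2 - x2 + cpCost P1 P2 x1 x2 := by
  set d := (P1 - x1) - (P2 - x2)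
  have hd : d < √(d^2 + 4 * P1 * P2) := Real.lt_sqrt_of_sq_lt (by nlinarith)
  have hnd : -d < √(d^2 + 4 * P1 * P2) := Real.lt_sqrt_of_sq_lt (by nlinarith)
  rw [sub_add_cpCost_left, sub_add_cpCost_right]
  constructor <;> linarith

lemma sub_add_cpCost_mul (hP : 0 ≤ P1 * P2) :
    (P1 - x1 + cpCost P1 P2 x1 x2) * (P2 - x2 + cpCost P1 P2 x1 x2) = P1 * P2 := by
  set d := (P1 - x1) - (P2 - x2)
  have hsq : √(d^2 + 4 * P1 * P2) ^ 2 = d^2 + 4 * P1 * P2 := Real.sq_sqrt (by nlinarith)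
  rw [sub_add_cpCost_left, sub_add_cpCost_right]
  linear_combination hsq / 4

lemma cpCost_eq_of_mul_eq_s5 {c : ℝ} (h1 : 0 < P1 - x1 + c) (h2 : 0 < P2 - x2 + c)
    (hmul : (P1 - x1 + c) * (P2 - x2 + c) = P1 * P2) : cpCost P1 P2 x1 x2 = c := by
  have hsqrt : √(((P1 - x1) - (P2 - x2))^2 + 4 * P1 * P2) = 2 * c + (P1 - x1) + (P2 - x2) := by
    rw [Real.sqrt_eq_iff_eq_sq (by nlinarith) (by linarith)]
    linear_combination -4 * hmul
  rw [cpCost, hsqrt]; ring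

end CpCost

theorem stmt_5 (P1 P2 x1 x2 : ℝ) (hP1 : 0 < P1) (hP2 : 0 < P2) :
    0 < P1 - x1 + cpCost P1 P2 x1 x2 ∧ 0 < P2 - x2 + cpCost P1 P2 x1 x2 ∧
    (P1 - x1 + cpCost P1 P2 x1 x2) * (P2 - x2 + cpCost P1 P2 x1 x2) = P1 * P2 ∧
    cpCost P1 P2 x1 x2 +
      cpCost (P1 - x1 + cpCost P1 P2 x1 x2) (P2 - x2 + cpCost P1 P2 x1 x2) (-x1) (-x2) = 0 := by
  have hP : 0 < P1 * P2 := mul_pos hP1 hP2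
  obtain ⟨h1, h2⟩ := sub_add_cpCost_pos x1 x2 hP
  have hmul := sub_add_cpCost_mul x1 x2 hP.le
  refine ⟨h1, h2, hmul, ?_⟩
  set C := cpCost P1 P2 x1 x2
  have hback : cpCost (P1 - x1 + C) (P2 - x2 + C) (-x1) (-x2) = -C := by
    apply cpCost_eq_of_mul_eq_s5
    · linarith
    · linarith
    · linear_combination -hmul
  linarith
end

section
/- In the setting of a continuous, strictly increasing u: (0,∞)ⁿ → ℝ with liquidity Π ∈ (0,∞)ⁿ and cost C(x) = inf{c ∈ [minᵢ xᵢ, maxᵢ xᵢ] : u(Π − x + c𝟙) ≥ u(Π)}, the no-arbitrage bounds hold: minᵢ xᵢ ≤ C(x) ≤ maxᵢ xᵢ, and C(x) ∈ {minᵢ xᵢ, maxᵢ xᵢ} if and only if x = c·𝟙 for some c ∈ ℝ. -/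
/-!
Call `c ∈ [min x, max x]` admissible if `u(Π - x + c𝟙) ≥ u(Π)`. Since `Π - x + (max x)𝟙 ≥ Π`, the
point `max x` is admissible, which gives the bounds. If `x` is not constant, then
`Π - x + (max x)𝟙 > Π`, so by continuity slightly smaller `c` are still admissible and
`C x < max x`; and `Π - x + (min x)𝟙 < Π`, so by continuity and strict monotonicity no `c` close
to `min x` is admissible and `C x > min x`.
-/

open Filter Topology Set

def posOrthant (ι : Type*) : Set (ι → ℝ) := {z | ∀ i, 0 < z i}

theorem isOpen_posOrthant {ι : Type*} [Finite ι] : IsOpen (posOrthant ι) := by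
  simp only [posOrthant, ofPred_forall]
  exact isOpen_iInter_of_finite fun i => isOpen_lt continuous_const (continuous_apply i)

theorem exists_mem_posOrthant_between {ι : Type*} {y p : ι → ℝ} (hp : p ∈ posOrthant ι)
    (hyp : y < p) : ∃ w ∈ posOrthant ι, y ≤ w ∧ w < p := by
  classical
  obtain ⟨hle, j, hj⟩ := Pi.lt_def.1 hyp
  have hpj : 0 < p j := hp j
  refine ⟨Function.update p j (max (y j) (p j / 2)), fun i => ?_, fun i => ?_,
    Pi.lt_def.2 ⟨fun i => ?_, j, ?_⟩⟩
  · rcases eq_or_ne i j with rfl | hij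
    · simp only [Function.update_self]; exact lt_max_of_lt_right (half_pos hpj)
    · rw [Function.update_of_ne hij]; exact hp i
  · rcases eq_or_ne i j with rfl | hij
    · simp only [Function.update_self]; exact le_max_left _ _
    · rw [Function.update_of_ne hij]; exact hle i
  · rcases eq_or_ne i j with rfl | hij
    · simp only [Function.update_self]; exact max_le (hle _) (half_le_self hpj.le)
    · rw [Function.update_of_ne hij]
  · simp only [Function.update_self]; exact max_lt hj (half_lt_self hpj)

theorem sub_add_lt_iff {ι : Type*} {p x : ι → ℝ} {c : ℝ} :
    (fun i => p i - x i + c) < p ↔ Function.const ι c < x := by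
  simp only [Pi.lt_def, Function.const_apply]
  constructor <;> rintro ⟨hle, j, hj⟩ <;>
    exact ⟨fun i => by have := hle i; simp only [Function.const_apply] at this ⊢; linarith,
      j, by linarith⟩

theorem lt_sub_add_iff {ι : Type*} {p x : ι → ℝ} {c : ℝ} :
    p < (fun i => p i - x i + c) ↔ x < Function.const ι c := by
  simp only [Pi.lt_def, Function.const_apply]
  constructor <;> rintro ⟨hle, j, hj⟩ <;>
    exact ⟨fun i => by have := hle i; simp only [Function.const_apply] at this ⊢; linarith,
      j, by linarith⟩

section Line

variable {ι : Type*} [Finite ι] {u : (ι → ℝ) → ℝ} {a p : ι → ℝ} {c₀ : ℝ}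

theorem eventually_apply_line_lt (hu_cont : ContinuousOn u (posOrthant ι))
    (hu_mono : StrictMonoOn u (posOrthant ι)) (hp : p ∈ posOrthant ι)
    (hlt : (fun i => a i + c₀) < p) :
    ∀ᶠ c in 𝓝 c₀, (fun i => a i + c) ∈ posOrthant ι → u (fun i => a i + c) < u p := by
  -- `a + c₀` itself may lie on the boundary of the orthant, where `u` need not be continuous;
  -- bound the line instead by a parallel one through an interior point `w < p`.
  obtain ⟨w, hw, haw, hwp⟩ := exists_mem_posOrthant_between hp hlt
  set shift : ℝ → ι → ℝ := fun c i => w i + (c - c₀)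
  have hshift : Continuous shift := by fun_prop
  have hshift₀ : shift c₀ = w := by ext; simp [shift]
  have hw_nhds : posOrthant ι ∈ 𝓝 (shift c₀) := hshift₀ ▸ isOpen_posOrthant.mem_nhds hw
  have h_mem : ∀ᶠ c in 𝓝 c₀, shift c ∈ posOrthant ι :=
    hshift.continuousAt.preimage_mem_nhds hw_nhds
  have h_lt : ∀ᶠ c in 𝓝 c₀, u (shift c) < u p :=
    ((hu_cont.continuousAt hw_nhds).comp hshift.continuousAt).eventually_lt continuousAt_const
      (by simpa only [Function.comp_apply, hshift₀] using hu_mono hw hp hwp)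
  filter_upwards [h_mem, h_lt] with c hc_mem hc_lt hline
  refine lt_of_le_of_lt (hu_mono.monotoneOn hline hc_mem fun i => ?_) hc_lt
  have := haw i
  simp only [shift]
  linarith

theorem eventually_lt_apply_line (hu_cont : ContinuousOn u (posOrthant ι))
    (hu_mono : StrictMonoOn u (posOrthant ι)) (hp : p ∈ posOrthant ι)
    (hlt : p < fun i => a i + c₀) :
    ∀ᶠ c in 𝓝 c₀, (fun i => a i + c) ∈ posOrthant ι ∧ u p < u (fun i => a i + c) := by
  set line : ℝ → ι → ℝ := fun c i => a i + c
  have hline : Continuous line := by fun_prop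
  have h₀ : line c₀ ∈ posOrthant ι := fun i => (hp i).trans_le (hlt.le i)
  have h_nhds : posOrthant ι ∈ 𝓝 (line c₀) := isOpen_posOrthant.mem_nhds h₀
  exact Eventually.and (hline.continuousAt.preimage_mem_nhds h_nhds)
    (continuousAt_const.eventually_lt ((hu_cont.continuousAt h_nhds).comp hline.continuousAt)
      (hu_mono hp h₀ hlt))

end Line

section CostSet

open Finset

variable {ι : Type*} [Fintype ι] [Nonempty ι] {u : (ι → ℝ) → ℝ} {p x : ι → ℝ}

def costSet (u : (ι → ℝ) → ℝ) (p x : ι → ℝ) : Set ℝ :=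
  {c : ℝ | c ∈ Set.Icc (univ.inf' univ_nonempty x) (univ.sup' univ_nonempty x) ∧
    (∀ i, 0 < p i - x i + c) ∧ u (fun i => p i - x i + c) ≥ u p}

theorem const_inf'_lt_of_ne_const (hx : ¬∃ c, x = fun _ => c) :
    Function.const ι (univ.inf' univ_nonempty x) < x :=
  lt_of_le_of_ne (fun i => inf'_le _ (mem_univ i)) fun h => hx ⟨_, h.symm⟩

theorem lt_const_sup'_of_ne_const (hx : ¬∃ c, x = fun _ => c) :
    x < Function.const ι (univ.sup' univ_nonempty x) :=
  lt_of_le_of_ne (fun i => le_sup' _ (mem_univ i)) fun h => hx ⟨_, h⟩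

theorem bddBelow_costSet : BddBelow (costSet u p x) :=
  ⟨_, fun _ hc => hc.1.1⟩

theorem sup'_mem_costSet (hu : MonotoneOn u (posOrthant ι)) (hp : p ∈ posOrthant ι) :
    univ.sup' univ_nonempty x ∈ costSet u p x := by
  have hle : p ≤ fun i => p i - x i + univ.sup' univ_nonempty x := fun i => by
    linarith [le_sup' x (mem_univ i)]
  obtain ⟨i₀⟩ := ‹Nonempty ι›
  have hpos : ∀ i, 0 < p i - x i + univ.sup' univ_nonempty x := fun i => (hp i).trans_le (hle i)
  exact ⟨⟨(inf'_le x (mem_univ i₀)).trans (le_sup' x (mem_univ i₀)), le_rfl⟩, hpos,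
    hu hp hpos hle⟩

theorem inf'_le_csInf_costSet (hu : MonotoneOn u (posOrthant ι)) (hp : p ∈ posOrthant ι) :
    univ.inf' univ_nonempty x ≤ sInf (costSet u p x) :=
  le_csInf ⟨_, sup'_mem_costSet hu hp⟩ fun _ hc => hc.1.1

theorem csInf_costSet_le_sup' (hu : MonotoneOn u (posOrthant ι)) (hp : p ∈ posOrthant ι) :
    sInf (costSet u p x) ≤ univ.sup' univ_nonempty x :=
  csInf_le bddBelow_costSet (sup'_mem_costSet hu hp)

theorem csInf_costSet_lt_sup' (hu_cont : ContinuousOn u (posOrthant ι))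
    (hu_mono : StrictMonoOn u (posOrthant ι)) (hp : p ∈ posOrthant ι)
    (hx : ¬∃ c, x = fun _ => c) :
    sInf (costSet u p x) < univ.sup' univ_nonempty x := by
  set m := univ.inf' univ_nonempty x
  set M := univ.sup' univ_nonempty x
  have hxM := lt_const_sup'_of_ne_const hx
  have hmM : m < M := Function.const_lt_const.1 ((const_inf'_lt_of_ne_const hx).trans hxM)
  have hev := (eventually_lt_apply_line hu_cont hu_mono hp (lt_sub_add_iff.2 hxM)).and
    (Ioi_mem_nhds hmM)
  obtain ⟨c, ⟨⟨hc_pos, hc_gt⟩, hmc⟩, hcM⟩ :=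
    ((hev.filter_mono nhdsWithin_le_nhds).and self_mem_nhdsWithin).exists (f := 𝓝[<] M)
  exact (csInf_le bddBelow_costSet ⟨⟨hmc.le, hcM.le⟩, hc_pos, hc_gt.le⟩).trans_lt hcM

theorem inf'_lt_csInf_costSet (hu_cont : ContinuousOn u (posOrthant ι))
    (hu_mono : StrictMonoOn u (posOrthant ι)) (hp : p ∈ posOrthant ι)
    (hx : ¬∃ c, x = fun _ => c) :
    univ.inf' univ_nonempty x < sInf (costSet u p x) := by
  refine (inf'_le_csInf_costSet hu_mono.monotoneOn hp).lt_of_ne fun h => ?_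
  have hfreq : ∃ᶠ c in 𝓝 (univ.inf' univ_nonempty x), c ∈ costSet u p x :=
    mem_closure_iff_frequently.1 <|
      h ▸ csInf_mem_closure ⟨_, sup'_mem_costSet hu_mono.monotoneOn hp⟩ bddBelow_costSet
  have hev := eventually_apply_line_lt hu_cont hu_mono hp
    (sub_add_lt_iff.2 (const_inf'_lt_of_ne_const hx))
  obtain ⟨c, hc, hc_lt⟩ := (hfreq.and_eventually hev).exists
  exact hc.2.2.not_gt (hc_lt hc.2.1)

end CostSet

theorem stmt_9 (n : ℕ) [Nonempty (Fin n)] (u : (Fin n → ℝ) → ℝ)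
    (hu_cont : ContinuousOn u {z : Fin n → ℝ | ∀ i, 0 < z i})
    (hu_mono : ∀ z w : Fin n → ℝ, (∀ i, 0 < z i) → (∀ i, 0 < w i) →
      (∀ i, z i ≤ w i) → z ≠ w → u z < u w)
    (Pl : Fin n → ℝ) (hPl : ∀ i, 0 < Pl i)
    (C : (Fin n → ℝ) → ℝ)
    (hC : ∀ x : Fin n → ℝ, C x = sInf {c : ℝ |
      c ∈ Set.Icc (Finset.univ.inf' Finset.univ_nonempty x) (Finset.univ.sup' Finset.univ_nonempty x) ∧
      (∀ i, 0 < Pl i - x i + c) ∧ u (fun i => Pl i - x i + c) ≥ u Pl}) :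
    ∀ x : Fin n → ℝ,
      Finset.univ.inf' Finset.univ_nonempty x ≤ C x ∧
      C x ≤ Finset.univ.sup' Finset.univ_nonempty x ∧
      ((C x = Finset.univ.inf' Finset.univ_nonempty x ∨
        C x = Finset.univ.sup' Finset.univ_nonempty x) ↔ ∃ c : ℝ, x = fun _ => c) := by
  have hu : StrictMonoOn u (posOrthant (Fin n)) := fun z hz w hw hzw =>
    hu_mono z w hz hw hzw.le hzw.ne
  intro x
  rw [show C x = sInf (costSet u Pl x) from hC x]
  refine ⟨inf'_le_csInf_costSet hu.monotoneOn hPl, csInf_costSet_le_sup' hu.monotoneOn hPl,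
    fun h => ?_, ?_⟩
  · by_contra hx
    rcases h with h | h
    · exact (inf'_lt_csInf_costSet hu_cont hu hPl hx).ne' h
    · exact (csInf_costSet_lt_sup' hu_cont hu hPl hx).ne h
  · rintro ⟨c, rfl⟩
    left
    refine le_antisymm ?_ (inf'_le_csInf_costSet hu.monotoneOn hPl)
    simpa only [Finset.sup'_const, Finset.inf'_const]
      using csInf_costSet_le_sup' (x := fun _ => c) hu.monotoneOn hPl
end

section
/- In the setting of a continuous, strictly increasing, quasiconcave u: (0,∞)ⁿ → ℝ with liquidity Π ∈ (0,∞)ⁿ, the associated cost function C: ℝⁿ → ℝ (defined by utility indifference) is convex: C(tx + (1−t)y) ≤ t·C(x) + (1−t)·C(y) for all x, y ∈ ℝⁿ and t ∈ [0,1]. -/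
/-!
Write `A x = {c | Π - x + c𝟙 > 0, u(Π - x + c𝟙) ≥ u(Π)}` for the set of cash amounts that make
the trade `x` acceptable. By monotonicity of `u`, `max x ∈ A x` and every element of `A x` is at
least `min x`, so `C x = inf A x`. Quasiconcavity of `u` makes the graph `{(x, c) | c ∈ A x}`
convex, and an infimum over the fibres of a convex set is a convex function.
-/

open Set
open scoped Pointwise

theorem csInf_inter_Iic_of_mem {α : Type*} [ConditionallyCompleteLinearOrder α] {S : Set α}
    {b : α} (hS : BddBelow S) (hb : b ∈ S) : sInf (S ∩ Iic b) = sInf S := by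
  refine le_antisymm (le_csInf ⟨b, hb⟩ fun a ha => ?_)
    (csInf_le_csInf hS ⟨b, hb, le_rfl⟩ inter_subset_left)
  rcases le_total a b with hab | hba
  · exact csInf_le (hS.mono inter_subset_left) ⟨ha, hab⟩
  · exact (csInf_le (hS.mono inter_subset_left) (show b ∈ S ∩ Iic b from ⟨hb, le_rfl⟩)).trans hba

theorem convexOn_sInf_of_convex_graph {E : Type*} [AddCommGroup E] [Module ℝ E]
    {A : E → Set ℝ} (hA : Convex ℝ {p : E × ℝ | p.2 ∈ A p.1}) (hne : ∀ x, (A x).Nonempty)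
    (hbdd : ∀ x, BddBelow (A x)) : ConvexOn ℝ univ fun x => sInf (A x) := by
  refine ⟨convex_univ, fun x _ y _ a b ha hb hab => ?_⟩
  have hsub : a • A x + b • A y ⊆ A (a • x + b • y) := by
    rintro _ ⟨_, ⟨c, hc, rfl⟩, _, ⟨d, hd, rfl⟩, rfl⟩
    exact hA (x := (x, c)) (y := (y, d)) hc hd ha hb hab
  calc sInf (A (a • x + b • y))
      ≤ sInf (a • A x + b • A y) :=
        csInf_le_csInf (hbdd _) (((hne x).smul_set).add (hne y).smul_set) hsub
    _ = a • sInf (A x) + b • sInf (A y) := by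
        rw [csInf_add (hne x).smul_set ((hbdd x).smul_of_nonneg ha) (hne y).smul_set
          ((hbdd y).smul_of_nonneg hb), Real.sInf_smul_of_nonneg ha, Real.sInf_smul_of_nonneg hb]

section AcceptanceSet

def acceptanceSet {ι : Type*} (u : (ι → ℝ) → ℝ) (P x : ι → ℝ) : Set ℝ :=
  {c | (∀ i, 0 < P i - x i + c) ∧ u P ≤ u fun i => P i - x i + c}

variable {ι : Type*} {u : (ι → ℝ) → ℝ} {P : ι → ℝ}

theorem convex_graph_acceptanceSet (hu : QuasiconcaveOn ℝ {z : ι → ℝ | ∀ i, 0 < z i} u) :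
    Convex ℝ {p : (ι → ℝ) × ℝ | p.2 ∈ acceptanceSet u P p.1} := by
  rintro ⟨x, c⟩ hxc ⟨y, d⟩ hyd a b ha hb hab
  have hcomb : ∀ i, P i - (a • x + b • y) i + (a * c + b * d) =
      (a • (fun i => P i - x i + c) + b • fun i => P i - y i + d) i := by
    intro i
    simp only [Pi.add_apply, Pi.smul_apply, smul_eq_mul]
    linear_combination (-P i) * hab
  have hmem := hu (u P) ⟨hxc.1, hxc.2⟩ ⟨hyd.1, hyd.2⟩ ha hb hab
  show a * c + b * d ∈ acceptanceSet u P (a • x + b • y)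
  refine ⟨fun i => hcomb i ▸ hmem.1 i, ?_⟩
  rw [funext hcomb]
  exact hmem.2

variable [Fintype ι] [Nonempty ι]

theorem sup'_mem_acceptanceSet (hP : ∀ i, 0 < P i)
    (hu : MonotoneOn u {z : ι → ℝ | ∀ i, 0 < z i}) (x : ι → ℝ) :
    Finset.univ.sup' Finset.univ_nonempty x ∈ acceptanceSet u P x := by
  have hle : ∀ i, x i ≤ Finset.univ.sup' Finset.univ_nonempty x :=
    fun i => Finset.le_sup' x (Finset.mem_univ i)
  have hpos : ∀ i, 0 < P i - x i + Finset.univ.sup' Finset.univ_nonempty x :=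
    fun i => by linarith [hle i, hP i]
  exact ⟨hpos, hu hP hpos fun i => by linarith [hle i]⟩

theorem inf'_le_of_mem_acceptanceSet (hP : ∀ i, 0 < P i)
    (hu : StrictMonoOn u {z : ι → ℝ | ∀ i, 0 < z i}) {x : ι → ℝ} {c : ℝ}
    (hc : c ∈ acceptanceSet u P x) : Finset.univ.inf' Finset.univ_nonempty x ≤ c := by
  obtain ⟨i₀⟩ := ‹Nonempty ι›
  by_contra! hlt
  have hcx : ∀ i, c < x i := fun i => hlt.trans_le (Finset.inf'_le x (Finset.mem_univ i))
  have hless : (fun i => P i - x i + c) < P :=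
    Pi.lt_def.2 ⟨fun i => by linarith [hcx i], i₀, by linarith [hcx i₀]⟩
  exact (hu hc.1 hP hless).not_ge hc.2

theorem sInf_Icc_inter_acceptanceSet (hP : ∀ i, 0 < P i)
    (hu : StrictMonoOn u {z : ι → ℝ | ∀ i, 0 < z i}) (x : ι → ℝ) :
    sInf {c : ℝ | c ∈ Icc (Finset.univ.inf' Finset.univ_nonempty x)
        (Finset.univ.sup' Finset.univ_nonempty x) ∧
      (∀ i, 0 < P i - x i + c) ∧ u (fun i => P i - x i + c) ≥ u P} =
    sInf (acceptanceSet u P x) := by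
  have hset : {c : ℝ | c ∈ Icc (Finset.univ.inf' Finset.univ_nonempty x)
        (Finset.univ.sup' Finset.univ_nonempty x) ∧
      (∀ i, 0 < P i - x i + c) ∧ u (fun i => P i - x i + c) ≥ u P} =
      acceptanceSet u P x ∩ Iic (Finset.univ.sup' Finset.univ_nonempty x) := by
    ext c
    constructor
    · rintro ⟨⟨-, hc⟩, hmem⟩
      exact ⟨hmem, hc⟩
    · rintro ⟨hmem, hc⟩
      exact ⟨⟨inf'_le_of_mem_acceptanceSet hP hu hmem, hc⟩, hmem⟩
  rw [hset, csInf_inter_Iic_of_mem ⟨_, fun _ => inf'_le_of_mem_acceptanceSet hP hu⟩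
    (sup'_mem_acceptanceSet hP hu.monotoneOn x)]

end AcceptanceSet

theorem stmt_10_general (n : ℕ) [Nonempty (Fin n)] (u : (Fin n → ℝ) → ℝ)
    (hu_mono : ∀ z w : Fin n → ℝ, (∀ i, 0 < z i) → (∀ i, 0 < w i) →
      (∀ i, z i ≤ w i) → z ≠ w → u z < u w)
    (hu_qc : ∀ z w : Fin n → ℝ, (∀ i, 0 < z i) → (∀ i, 0 < w i) →
      ∀ t : ℝ, 0 ≤ t → t ≤ 1 → min (u z) (u w) ≤ u (fun i => t * z i + (1 - t) * w i))
    (Pl : Fin n → ℝ) (hPl : ∀ i, 0 < Pl i)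
    (C : (Fin n → ℝ) → ℝ)
    (hC : ∀ x : Fin n → ℝ, C x = sInf {c : ℝ |
      c ∈ Set.Icc (Finset.univ.inf' Finset.univ_nonempty x) (Finset.univ.sup' Finset.univ_nonempty x) ∧
      (∀ i, 0 < Pl i - x i + c) ∧ u (fun i => Pl i - x i + c) ≥ u Pl}) :
    ∀ (x y : Fin n → ℝ) (t : ℝ), 0 ≤ t → t ≤ 1 →
      C (fun i => t * x i + (1 - t) * y i) ≤ t * C x + (1 - t) * C y := by
  have hsmono : StrictMonoOn u {z : Fin n → ℝ | ∀ i, 0 < z i} :=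
    fun z hz w hw hzw => hu_mono z w hz hw hzw.le hzw.ne
  have hqc : QuasiconcaveOn ℝ {z : Fin n → ℝ | ∀ i, 0 < z i} u := by
    refine quasiconcaveOn_iff_min_le.2
      ⟨fun z hz w hw a b ha hb hab i => convex_Ioi (0 : ℝ) (hz i) (hw i) ha hb hab,
        fun z hz w hw a b ha hb hab => ?_⟩
    obtain rfl : b = 1 - a := eq_sub_of_add_eq' hab
    exact hu_qc z w hz hw a ha (by linarith)
  have hconvex : ConvexOn ℝ univ fun x => sInf (acceptanceSet u Pl x) :=
    convexOn_sInf_of_convex_graph (convex_graph_acceptanceSet hqc)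
      (fun x => ⟨_, sup'_mem_acceptanceSet hPl hsmono.monotoneOn x⟩)
      (fun x => ⟨_, fun _ => inf'_le_of_mem_acceptanceSet hPl hsmono⟩)
  intro x y t ht0 ht1
  simp only [hC, sInf_Icc_inter_acceptanceSet hPl hsmono]
  exact hconvex.2 (mem_univ x) (mem_univ y) ht0 (sub_nonneg.2 ht1) (add_sub_cancel t 1)

theorem stmt_10 (n : ℕ) [Nonempty (Fin n)] (u : (Fin n → ℝ) → ℝ)
    (hu_cont : ContinuousOn u {z : Fin n → ℝ | ∀ i, 0 < z i})
    (hu_mono : ∀ z w : Fin n → ℝ, (∀ i, 0 < z i) → (∀ i, 0 < w i) →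
      (∀ i, z i ≤ w i) → z ≠ w → u z < u w)
    (hu_qc : ∀ z w : Fin n → ℝ, (∀ i, 0 < z i) → (∀ i, 0 < w i) →
      ∀ t : ℝ, 0 ≤ t → t ≤ 1 → min (u z) (u w) ≤ u (fun i => t * z i + (1 - t) * w i))
    (Pl : Fin n → ℝ) (hPl : ∀ i, 0 < Pl i)
    (C : (Fin n → ℝ) → ℝ)
    (hC : ∀ x : Fin n → ℝ, C x = sInf {c : ℝ |
      c ∈ Set.Icc (Finset.univ.inf' Finset.univ_nonempty x) (Finset.univ.sup' Finset.univ_nonempty x) ∧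
      (∀ i, 0 < Pl i - x i + c) ∧ u (fun i => Pl i - x i + c) ≥ u Pl}) :
    ∀ (x y : Fin n → ℝ) (t : ℝ), 0 ≤ t → t ≤ 1 →
      C (fun i => t * x i + (1 - t) * y i) ≤ t * C x + (1 - t) * C y :=
  stmt_10_general n u hu_mono hu_qc Pl hPl C hC
end

section
/- Let C: ℝⁿ → ℝ be translative (C(x + c𝟙) = C(x) + c). Fix α > −1 and x ∈ ℝⁿ. Then c̃ = (1+α)·C(x/(1+α)) is the unique solution of the rebalancing fixed point: c̃ = C(x + y − αΠ*) where y = αΠ* − (α/(1+α))x + (α/(1+α))c̃·𝟙, i.e., y satisfies y = α(Π* − x − (y − αΠ*) + c̃𝟙). -/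
/-! Solving the rebalancing equation for `y` shows that the pool is traded against
`x/(1+α) + (α/(1+α)) c 𝟙`; by translativity the fixed point then reads
`c = C(x/(1+α)) + (α/(1+α)) c`, a linear equation in `c` with the single solution
`c = (1+α) C(x/(1+α))`. -/

lemma rebalance_eq_iff {α P x y c : ℝ} (hα : 1 + α ≠ 0) :
    y = α * (P - x - (y - α * P) + c) ↔ x + y - α * P = x / (1 + α) + α / (1 + α) * c := by
  constructor <;> intro h
  · field_simp
    linear_combination h
  · field_simp at h
    linear_combination h

lemma eq_translative_shift_iff {ι : Type*} {C : (ι → ℝ) → ℝ}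
    (htrans : ∀ (x : ι → ℝ) (c : ℝ), C (fun i => x i + c) = C x + c) {α : ℝ} (hα : 1 + α ≠ 0)
    (z : ι → ℝ) (c : ℝ) :
    c = C (fun i => z i + α / (1 + α) * c) ↔ c = (1 + α) * C z := by
  rw [htrans]
  constructor <;> intro h
  · field_simp at h
    linear_combination h
  · rw [h]
    field_simp

/-- Proposition 5.2 (rebalancing liquidity provider): with a rebalancing liquidity
provider holding fraction `α` of the pool `Pl`, the effective cost of trading `x`
is `(1+α) C(x/(1+α))`, i.e. `c = (1+α) C(x/(1+α))` is the unique solution of the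
fixed point `c = C(x + y - α Pl)` where `y = α (Pl - x - (y - α Pl) + c 𝟙)`. -/
theorem stmt_16 (n : ℕ) (C : (Fin n → ℝ) → ℝ)
    (htrans : ∀ (x : Fin n → ℝ) (c : ℝ), C (fun i => x i + c) = C x + c)
    (Pl : Fin n → ℝ) (α : ℝ) (hα : -1 < α) (x : Fin n → ℝ) :
    (∃ y : Fin n → ℝ,
      (∀ i, y i = α * (Pl i - x i - (y i - α * Pl i) + (1 + α) * C (fun j => x j / (1 + α)))) ∧
      (1 + α) * C (fun j => x j / (1 + α)) = C (fun i => x i + y i - α * Pl i)) ∧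
    ∀ (c : ℝ) (y : Fin n → ℝ),
      (∀ i, y i = α * (Pl i - x i - (y i - α * Pl i) + c)) →
      c = C (fun i => x i + y i - α * Pl i) →
      c = (1 + α) * C (fun j => x j / (1 + α)) := by
  have h1α : 1 + α ≠ 0 := by linarith
  have htraded : ∀ (c : ℝ) (y : Fin n → ℝ), (∀ i, y i = α * (Pl i - x i - (y i - α * Pl i) + c)) →
      (fun i => x i + y i - α * Pl i) = fun i => x i / (1 + α) + α / (1 + α) * c :=
    fun c y hy => funext fun i => (rebalance_eq_iff h1α).1 (hy i)
  have hfixed := eq_translative_shift_iff htrans h1α (fun j => x j / (1 + α))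
  set c₀ := (1 + α) * C (fun j => x j / (1 + α))
  refine ⟨?_, fun c y hy hc => (hfixed c).1 (hc.trans (congrArg C (htraded c y hy)))⟩
  set y₀ : Fin n → ℝ := fun i => x i / (1 + α) + α / (1 + α) * c₀ - x i + α * Pl i
  have hy₀ : ∀ i, y₀ i = α * (Pl i - x i - (y₀ i - α * Pl i) + c₀) :=
    fun i => (rebalance_eq_iff h1α).2 (by simp only [y₀]; ring)
  refine ⟨y₀, hy₀, ?_⟩
  rw [htraded c₀ _ hy₀]
  exact (hfixed c₀).2 rfl
end

section
/- Let C: ℝⁿ → ℝ be translative and satisfy the path independence C(x+y;Π) = C(x;Π) + C(y;Π') with Π' = Π − x + C(x;Π)𝟙. Define C_γ(x;Π) = (1+γ)C(x;Π) − γ·minᵢ xᵢ. Then for x, y ∈ ℝⁿ with minᵢ(xᵢ+yᵢ) = minᵢ xᵢ + minᵢ yᵢ, one has C_γ(x+y;Π) = C_γ(x;Π) + C_γ(y;Π'). In particular, C_γ(x + c𝟙;Π) = C_γ(x;Π) + c for all c ∈ ℝ, and C_γ(x;Π) = C_γ(λx;Π) + C_γ((1−λ)x;Π'') for λ ∈ [0,1]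 with Π'' the post-trade pool after λx. -/
/-! The fee adds the term `-γ · min x` to a path-independent cost, and this term is additive
along a split `x + y` precisely when the minima add. They do for a translation `x + c𝟙`
and for a proportional split `λx + (1 - λ)x` with `λ ∈ [0, 1]`. -/

namespace Finset

variable {ι α : Type*} [LinearOrder α] (s : Finset ι) (hs : s.Nonempty) (f : ι → α)

theorem inf'_add_const [Add α] [AddRightMono α] (c : α) :
    s.inf' hs (fun i => f i + c) = s.inf' hs f + c :=
  (map_finset_inf' (OrderHom.mk (· + c) fun _ _ h => add_le_add_left h c) hs f).symm

theorem inf'_const_mul [Mul α] [Zero α] [PosMulMono α] {c : α} (hc : 0 ≤ c) :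
    s.inf' hs (fun i => c * f i) = c * s.inf' hs f :=
  (map_finset_inf' (OrderHom.mk (c * ·) fun _ _ h => mul_le_mul_of_nonneg_left h hc) hs f).symm

end Finset

theorem stmt_19_general (n : ℕ) [Nonempty (Fin n)]
    (C : (Fin n → ℝ) → (Fin n → ℝ) → ℝ)
    (htrans : ∀ (Pl x : Fin n → ℝ) (c : ℝ), C (fun i => x i + c) Pl = C x Pl + c)
    (hpath : ∀ Pl x y : Fin n → ℝ,
      C (fun i => x i + y i) Pl = C x Pl + C y (fun i => Pl i - x i + C x Pl))
    (γ : ℝ)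
    (Cγ : (Fin n → ℝ) → (Fin n → ℝ) → ℝ)
    (hCγ : ∀ x Pl : Fin n → ℝ,
      Cγ x Pl = (1 + γ) * C x Pl - γ * Finset.univ.inf' Finset.univ_nonempty x)
    (Pl : Fin n → ℝ) :
    (∀ x y : Fin n → ℝ,
      Finset.univ.inf' Finset.univ_nonempty (fun i => x i + y i) =
        Finset.univ.inf' Finset.univ_nonempty x + Finset.univ.inf' Finset.univ_nonempty y →
      Cγ (fun i => x i + y i) Pl = Cγ x Pl + Cγ y (fun i => Pl i - x i + C x Pl)) ∧
    (∀ (x : Fin n → ℝ) (c : ℝ), Cγ (fun i => x i + c) Pl = Cγ x Pl + c) ∧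
    (∀ (x : Fin n → ℝ) (l : ℝ), 0 ≤ l → l ≤ 1 →
      Cγ x Pl = Cγ (fun i => l * x i) Pl +
        Cγ (fun i => (1 - l) * x i)
          (fun i => Pl i - l * x i + C (fun j => l * x j) Pl)) := by
  have additive : ∀ x y : Fin n → ℝ,
      Finset.univ.inf' Finset.univ_nonempty (fun i => x i + y i) =
        Finset.univ.inf' Finset.univ_nonempty x + Finset.univ.inf' Finset.univ_nonempty y →
      Cγ (fun i => x i + y i) Pl = Cγ x Pl + Cγ y (fun i => Pl i - x i + C x Pl) := by
    intro x y hmin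
    rw [hCγ, hCγ, hCγ, hmin, hpath Pl x y]
    ring
  refine ⟨additive, fun x c => ?_, fun x l hl0 hl1 => ?_⟩
  · rw [hCγ, hCγ, htrans, Finset.inf'_add_const]
    ring
  · have hsplit : (fun i => l * x i + (1 - l) * x i) = x := by
      funext i
      ring
    have hmin : Finset.univ.inf' Finset.univ_nonempty (fun i => l * x i + (1 - l) * x i) =
        Finset.univ.inf' Finset.univ_nonempty (fun i => l * x i) +
          Finset.univ.inf' Finset.univ_nonempty (fun i => (1 - l) * x i) := by
      rw [hsplit, Finset.inf'_const_mul _ _ _ hl0, Finset.inf'_const_mul _ _ _ (sub_nonneg.2 hl1)]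
      ring
    simpa only [hsplit] using additive _ _ hmin

theorem stmt_19 (n : ℕ) [Nonempty (Fin n)]
    (C : (Fin n → ℝ) → (Fin n → ℝ) → ℝ)
    (htrans : ∀ (Pl x : Fin n → ℝ) (c : ℝ), C (fun i => x i + c) Pl = C x Pl + c)
    (hpath : ∀ Pl x y : Fin n → ℝ,
      C (fun i => x i + y i) Pl = C x Pl + C y (fun i => Pl i - x i + C x Pl))
    (γ : ℝ) (hγ : 0 ≤ γ)
    (Cγ : (Fin n → ℝ) → (Fin n → ℝ) → ℝ)
    (hCγ : ∀ x Pl : Fin n → ℝ,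
      Cγ x Pl = (1 + γ) * C x Pl - γ * Finset.univ.inf' Finset.univ_nonempty x)
    (Pl : Fin n → ℝ) :
    (∀ x y : Fin n → ℝ,
      Finset.univ.inf' Finset.univ_nonempty (fun i => x i + y i) =
        Finset.univ.inf' Finset.univ_nonempty x + Finset.univ.inf' Finset.univ_nonempty y →
      Cγ (fun i => x i + y i) Pl = Cγ x Pl + Cγ y (fun i => Pl i - x i + C x Pl)) ∧
    (∀ (x : Fin n → ℝ) (c : ℝ), Cγ (fun i => x i + c) Pl = Cγ x Pl + c) ∧
    (∀ (x : Fin n → ℝ) (l : ℝ), 0 ≤ l → l ≤ 1 →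
      Cγ x Pl = Cγ (fun i => l * x i) Pl +
        Cγ (fun i => (1 - l) * x i)
          (fun i => Pl i - l * x i + C (fun j => l * x j) Pl)) :=
  stmt_19_general n C htrans hpath γ Cγ hCγ Pl
end
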